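/- arXiv:2005.04555 — 2 statements merged into one kernel-verified Lean document; each statement's English description precedes it below -/
import Mathlib

section
/- The function (t,x) ↦ inf over ξ ∈ K of [ V(t, x+ξ) + ℓ(t,ξ) ] is continuous on [0,T]×ℝⁿ. -/
/-!
Coercivity of `ℓ` and boundedness of `V` localize the infimum: with `ξ₀ ∈ K` fixed and
`ℓ(t, ξ₀) ≤ B` on `[0,T]`, any `ξ` with `α‖ξ‖ > 2M + B - ℓ₀` does worse than `ξ₀`, so the
infimum over `K` equals the infimum over the compact set `K ∩ closedBall 0 R` for one `R`
independent of `(t, x)`. A parametric infimum over a compact set of a jointly continuous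
function is continuous.
-/

open Set

theorem IsCompact.continuousOn_sInf {X E α : Type*} [TopologicalSpace X] [TopologicalSpace E]
    [ConditionallyCompleteLinearOrder α] [TopologicalSpace α] [OrderTopology α]
    {s : Set X} {C : Set E} (hC : IsCompact C) {f : X → E → α}
    (hf : ContinuousOn ↿f (s ×ˢ C)) : ContinuousOn (fun x => sInf (f x '' C)) s := by
  have : CompactSpace C := isCompact_iff_compactSpace.mp hC
  let g : s → C → α := fun x ξ => f x ξ
  have hg : Continuous ↿g :=
    hf.comp_continuous (f := fun p : s × C => (p.1.1, p.2.1)) (by fun_prop)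
      fun p => ⟨p.1.2, p.2.2⟩
  rw [continuousOn_iff_continuous_domRestrict]
  convert isCompact_univ.continuous_sInf hg using 2 with x
  rw [image_univ, ← image_eq_range]
  rfl

theorem csInf_image_eq_of_subset {E α : Type*} [ConditionallyCompleteLattice α] {h : E → α}
    {C K : Set E} (hCK : C ⊆ K) (hbdd : BddBelow (h '' K)) {ξ₀ : E} (hξ₀ : ξ₀ ∈ C)
    (hge : ∀ ξ ∈ K \ C, h ξ₀ ≤ h ξ) : sInf (h '' K) = sInf (h '' C) := by
  have hbddC : BddBelow (h '' C) := hbdd.mono (image_mono hCK)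
  refine le_antisymm (csInf_le_csInf hbdd ⟨_, mem_image_of_mem h hξ₀⟩ (image_mono hCK)) ?_
  refine le_csInf ⟨_, mem_image_of_mem h (hCK hξ₀)⟩ ?_
  rintro _ ⟨ξ, hξK, rfl⟩
  by_cases hξC : ξ ∈ C
  · exact csInf_le hbddC (mem_image_of_mem h hξC)
  · exact (csInf_le hbddC (mem_image_of_mem h hξ₀)).trans (hge ξ ⟨hξK, hξC⟩)

theorem csInf_image_eq_inter_closedBall_of_coercive {E : Type*} [SeminormedAddCommGroup E]
    {h : E → ℝ} {K : Set E} {a α R : ℝ} (hα : 0 < α) (hcoer : ∀ ξ ∈ K, a + α * ‖ξ‖ ≤ h ξ)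
    {ξ₀ : E} (hξ₀K : ξ₀ ∈ K) (hξ₀ : h ξ₀ ≤ a + α * R) :
    sInf (h '' K) = sInf (h '' (K ∩ Metric.closedBall 0 R)) := by
  refine csInf_image_eq_of_subset inter_subset_left ⟨a, ?_⟩ ⟨hξ₀K, ?_⟩ ?_
  · rintro _ ⟨ξ, hξ, rfl⟩
    nlinarith [hcoer ξ hξ, norm_nonneg ξ]
  · rw [mem_closedBall_zero_iff]
    nlinarith [hcoer ξ₀ hξ₀K]
  · rintro ξ ⟨hξK, hξC⟩
    have hR : R < ‖ξ‖ := not_le.mp fun hR => hξC ⟨hξK, mem_closedBall_zero_iff.mpr hR⟩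
    nlinarith [hcoer ξ hξK]

theorem continuousOn_sInf_add_of_coercive {X E : Type*} [TopologicalSpace X]
    [NormedAddCommGroup E] [ProperSpace E] {s : Set X} {K : Set E} (hK : IsClosed K)
    {V ℓ : X → E → ℝ} {M ℓ₀ α B : ℝ} (hα : 0 < α)
    (hVcont : ContinuousOn ↿V (s ×ˢ univ)) (hVbd : ∀ t ∈ s, ∀ x, |V t x| ≤ M)
    (hℓcont : ContinuousOn ↿ℓ (s ×ˢ K)) (hℓcoer : ∀ t ∈ s, ∀ ξ ∈ K, ℓ₀ + α * ‖ξ‖ ≤ ℓ t ξ)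
    {ξ₀ : E} (hξ₀ : ξ₀ ∈ K) (hB : ∀ t ∈ s, ℓ t ξ₀ ≤ B) :
    ContinuousOn (fun p : X × E => sInf ((fun ξ => V p.1 (p.2 + ξ) + ℓ p.1 ξ) '' K))
      (s ×ˢ univ) := by
  -- `V(t, x + ξ₀) + ℓ(t, ξ₀) ≤ M + B = (ℓ₀ - M) + α R`, while `ℓ₀ - M + α‖ξ‖` bounds below.
  set R := (2 * M + B - ℓ₀) / α
  have hαR : α * R = 2 * M + B - ℓ₀ := mul_div_cancel₀ _ hα.ne'
  have hf : ContinuousOn (fun q : (X × E) × E => V q.1.1 (q.1.2 + q.2) + ℓ q.1.1 q.2)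
      ((s ×ˢ univ) ×ˢ (K ∩ Metric.closedBall 0 R)) :=
    .add (hVcont.comp (f := fun q : (X × E) × E => (q.1.1, q.1.2 + q.2)) (by fun_prop)
        fun q hq => ⟨hq.1.1, mem_univ _⟩)
      (hℓcont.comp (f := fun q : (X × E) × E => (q.1.1, q.2)) (by fun_prop)
        fun q hq => ⟨hq.1.1, hq.2.1⟩)
  refine ((isCompact_closedBall 0 R).inter_left hK).continuousOn_sInf
    (f := fun p ξ => V p.1 (p.2 + ξ) + ℓ p.1 ξ) hf |>.congr ?_
  rintro ⟨t, x⟩ ⟨ht, -⟩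
  refine csInf_image_eq_inter_closedBall_of_coercive hα (a := ℓ₀ - M) (fun ξ hξ => ?_) hξ₀ ?_
  · linarith [hℓcoer t ht ξ hξ, neg_le_of_abs_le (hVbd t ht (x + ξ))]
  · linarith [hB t ht, le_of_abs_le (hVbd t ht (x + ξ₀))]

theorem stmt_2_general (n : ℕ) (T M ℓ₀ α : ℝ)
    (hα : 0 < α)
    (K : Set (EuclideanSpace ℝ (Fin n)))
    (hKne : K.Nonempty) (hKcl : IsClosed K)
    (V : ℝ → EuclideanSpace ℝ (Fin n) → ℝ)
    (hVcont : ContinuousOn (fun p : ℝ × EuclideanSpace ℝ (Fin n) => V p.1 p.2)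
      (Icc (0:ℝ) T ×ˢ (univ : Set (EuclideanSpace ℝ (Fin n)))))
    (hVbd : ∀ t ∈ Icc (0:ℝ) T, ∀ x, |V t x| ≤ M)
    (ℓ : ℝ → EuclideanSpace ℝ (Fin n) → ℝ)
    (hℓcont : ContinuousOn (fun p : ℝ × EuclideanSpace ℝ (Fin n) => ℓ p.1 p.2)
      (Icc (0:ℝ) T ×ˢ K))
    (hℓcoer : ∀ t ∈ Icc (0:ℝ) T, ∀ ξ ∈ K, ℓ₀ + α * ‖ξ‖ ≤ ℓ t ξ) :
    ContinuousOn
      (fun p : ℝ × EuclideanSpace ℝ (Fin n) =>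
        sInf ((fun ξ => V p.1 (p.2 + ξ) + ℓ p.1 ξ) '' K))
      (Icc (0:ℝ) T ×ˢ (univ : Set (EuclideanSpace ℝ (Fin n)))) := by
  obtain ⟨ξ₀, hξ₀⟩ := hKne
  obtain ⟨B, hB⟩ : BddAbove ((fun t => ℓ t ξ₀) '' Icc 0 T) :=
    isCompact_Icc.bddAbove_image <|
      hℓcont.comp (Continuous.prodMk_left ξ₀).continuousOn fun t ht => ⟨ht, hξ₀⟩
  exact continuousOn_sInf_add_of_coercive hKcl hα hVcont hVbd hℓcont hℓcoer hξ₀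
    fun t ht => hB ⟨t, ht, rfl⟩

/-- (Paper's Corollary 2.1.) The intervention operator
`(t,x) ↦ inf_{ξ∈K} [V(t,x+ξ) + ℓ(t,ξ)]` is continuous on `[0,T] × ℝⁿ`. -/
theorem stmt_2 (n : ℕ) (hn : 1 ≤ n) (T M ℓ₀ α : ℝ)
    (hT : 0 < T) (hM : 0 < M) (hℓ₀ : 0 < ℓ₀) (hα : 0 < α)
    (K : Set (EuclideanSpace ℝ (Fin n)))
    (hKne : K.Nonempty) (hKcl : IsClosed K) (hKconv : Convex ℝ K)
    (hKcone : ∀ c : ℝ, 0 ≤ c → ∀ x ∈ K, c • x ∈ K)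
    (V : ℝ → EuclideanSpace ℝ (Fin n) → ℝ)
    (hVcont : ContinuousOn (fun p : ℝ × EuclideanSpace ℝ (Fin n) => V p.1 p.2)
      (Icc (0:ℝ) T ×ˢ (univ : Set (EuclideanSpace ℝ (Fin n)))))
    (hVbd : ∀ t ∈ Icc (0:ℝ) T, ∀ x, |V t x| ≤ M)
    (ℓ : ℝ → EuclideanSpace ℝ (Fin n) → ℝ)
    (hℓcont : ContinuousOn (fun p : ℝ × EuclideanSpace ℝ (Fin n) => ℓ p.1 p.2)
      (Icc (0:ℝ) T ×ˢ K))
    (hℓcoer : ∀ t ∈ Icc (0:ℝ) T, ∀ ξ ∈ K, ℓ₀ + α * ‖ξ‖ ≤ ℓ t ξ) :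
    ContinuousOn
      (fun p : ℝ × EuclideanSpace ℝ (Fin n) =>
        sInf ((fun ξ => V p.1 (p.2 + ξ) + ℓ p.1 ξ) '' K))
      (Icc (0:ℝ) T ×ˢ (univ : Set (EuclideanSpace ℝ (Fin n)))) :=
  stmt_2_general n T M ℓ₀ α hα K hKne hKcl V hVcont hVbd ℓ hℓcont hℓcoer
end

section
/- Suppose v : D → ℝ satisfies |v| ≤ M on D and |v(t,r,x) − v(s,u,y)| ≤ C₀(|t−s|^{1/2} + |r−u|^{1/2} + |x−y|) for all (t,r,x), (s,u,y) ∈ D. Then there is a constant C > 0, depending only on M and C₀, such that for every γ ∈ (0,1) and every (t,r,x) ∈ D: 0 ≤ v^γ(t,r,x) − v_γ(t,r,x) ≤ Cγ^{1/2}. -/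
open Set

/-- Sup-convolution `v^γ` over `D = [0,T] × [0,T] × ℝⁿ`. -/
noncomputable def supConv (n : ℕ) (T γ : ℝ)
    (v : ℝ → ℝ → EuclideanSpace ℝ (Fin n) → ℝ)
    (t r : ℝ) (x : EuclideanSpace ℝ (Fin n)) : ℝ :=
  sSup {y : ℝ | ∃ t' ∈ Icc (0:ℝ) T, ∃ r' ∈ Icc (0:ℝ) T,
    ∃ x' : EuclideanSpace ℝ (Fin n),
    y = v t' r' x' - 1/(2*γ^2) * ((t - t')^2 + (r - r')^2 + ‖x - x'‖^2)}

/-- Inf-convolution `v_γ` over `D = [0,T] × [0,T] × ℝⁿ`. -/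
noncomputable def infConv (n : ℕ) (T γ : ℝ)
    (v : ℝ → ℝ → EuclideanSpace ℝ (Fin n) → ℝ)
    (t r : ℝ) (x : EuclideanSpace ℝ (Fin n)) : ℝ :=
  sInf {y : ℝ | ∃ t' ∈ Icc (0:ℝ) T, ∃ r' ∈ Icc (0:ℝ) T,
    ∃ x' : EuclideanSpace ℝ (Fin n),
    y = v t' r' x' + 1/(2*γ^2) * ((t - t')^2 + (r - r')^2 + ‖x - x'‖^2)}

set_option maxHeartbeats 1000000 in
/-- `0 ≤ v^γ − v_γ ≤ Cγ^{1/2}` on `D`. -/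
theorem stmt_8 (n : ℕ) (hn : 1 ≤ n) (T M C₀ : ℝ) (hT : 0 < T) (hM : 0 < M) (hC₀ : 0 < C₀)
    (v : ℝ → ℝ → EuclideanSpace ℝ (Fin n) → ℝ)
    (hbd : ∀ t ∈ Icc (0:ℝ) T, ∀ r ∈ Icc (0:ℝ) T, ∀ x, |v t r x| ≤ M)
    (hmod : ∀ t ∈ Icc (0:ℝ) T, ∀ r ∈ Icc (0:ℝ) T, ∀ x : EuclideanSpace ℝ (Fin n),
      ∀ s ∈ Icc (0:ℝ) T, ∀ u ∈ Icc (0:ℝ) T, ∀ y : EuclideanSpace ℝ (Fin n),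
      |v t r x - v s u y| ≤ C₀ * (Real.sqrt |t - s| + Real.sqrt |r - u| + ‖x - y‖)) :
    ∃ C > 0, ∀ γ ∈ Ioo (0:ℝ) 1,
      ∀ t ∈ Icc (0:ℝ) T, ∀ r ∈ Icc (0:ℝ) T, ∀ x : EuclideanSpace ℝ (Fin n),
      0 ≤ supConv n T γ v t r x - infConv n T γ v t r x ∧
        supConv n T γ v t r x - infConv n T γ v t r x ≤ C * Real.sqrt γ := by
  set A : ℝ := Real.sqrt M with hA
  have hA0 : 0 < A := Real.sqrt_pos.mpr hM
  have hA2 : A ^ 2 = M := Real.sq_sqrt hM.le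
  set K : ℝ := C₀ * (2 * Real.sqrt (2 * A) + 2 * A) with hK
  have hK0 : 0 < K := by
    have h2A : 0 < Real.sqrt (2 * A) := Real.sqrt_pos.mpr (by linarith)
    have : 0 < 2 * Real.sqrt (2 * A) + 2 * A := by linarith
    exact mul_pos hC₀ this
  refine ⟨2 * K, by linarith, ?_⟩
  rintro γ ⟨hγ0, hγ1⟩ t ht r hr x
  have hγ2 : (0:ℝ) < 2 * γ ^ 2 := by positivity
  have hsg : 0 < Real.sqrt γ := Real.sqrt_pos.mpr hγ0
  have hγle : γ ≤ Real.sqrt γ := by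
    nlinarith [Real.sqrt_le_one.mpr hγ1.le, Real.sq_sqrt hγ0.le, Real.sqrt_nonneg γ]
  -- key estimate
  have key : ∀ t' ∈ Icc (0:ℝ) T, ∀ r' ∈ Icc (0:ℝ) T, ∀ x' : EuclideanSpace ℝ (Fin n),
      |v t' r' x' - v t r x| - 1/(2*γ^2) * ((t - t')^2 + (r - r')^2 + ‖x - x'‖^2)
        ≤ K * Real.sqrt γ := by
    intro t' ht' r' hr' x'
    set d2 : ℝ := (t - t')^2 + (r - r')^2 + ‖x - x'‖^2 with hd2
    have hd2nn : 0 ≤ d2 := by positivity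
    by_cases hcase : d2 < 4 * M * γ ^ 2
    · have habs : ∀ a : ℝ, a ^ 2 ≤ d2 → |a| ≤ 2 * A * γ := by
        intro a ha
        have h1 : a ^ 2 ≤ (2 * A * γ) ^ 2 := by nlinarith
        have := Real.sqrt_le_sqrt h1
        rwa [Real.sqrt_sq_eq_abs, Real.sqrt_sq (by positivity)] at this
      have h1 : |t - t'| ≤ 2 * A * γ := habs _ (by nlinarith [sq_nonneg (r - r'), sq_nonneg ‖x - x'‖])
      have h2 : |r - r'| ≤ 2 * A * γ := habs _ (by nlinarith [sq_nonneg (t - t'), sq_nonneg ‖x - x'‖])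
      have h3 : ‖x - x'‖ ≤ 2 * A * γ := by
        have := habs ‖x - x'‖ (by nlinarith [sq_nonneg (t - t'), sq_nonneg (r - r')])
        rwa [abs_of_nonneg (norm_nonneg _)] at this
      have hs1 : Real.sqrt |t - t'| ≤ Real.sqrt (2 * A) * Real.sqrt γ := by
        have := Real.sqrt_le_sqrt (show |t - t'| ≤ (2 * A) * γ by linarith)
        rwa [Real.sqrt_mul (by positivity) γ] at this
      have hs2 : Real.sqrt |r - r'| ≤ Real.sqrt (2 * A) * Real.sqrt γ := by
        have := Real.sqrt_le_sqrt (show |r - r'| ≤ (2 * A) * γ by linarith)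
        rwa [Real.sqrt_mul (by positivity) γ] at this
      have hs3 : ‖x - x'‖ ≤ 2 * A * Real.sqrt γ := by nlinarith
      have hmod' := hmod t' ht' r' hr' x' t ht r hr x
      have hcomm1 : |t' - t| = |t - t'| := abs_sub_comm _ _
      have hcomm2 : |r' - r| = |r - r'| := abs_sub_comm _ _
      have hcomm3 : ‖x' - x‖ = ‖x - x'‖ := norm_sub_rev _ _
      rw [hcomm1, hcomm2, hcomm3] at hmod'
      have hsum : Real.sqrt |t - t'| + Real.sqrt |r - r'| + ‖x - x'‖
          ≤ (2 * Real.sqrt (2 * A) + 2 * A) * Real.sqrt γ := by linarith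
      have hmul : C₀ * (Real.sqrt |t - t'| + Real.sqrt |r - r'| + ‖x - x'‖)
          ≤ K * Real.sqrt γ := by
        rw [hK, mul_assoc]
        exact mul_le_mul_of_nonneg_left hsum hC₀.le
      have hpen : 0 ≤ 1/(2*γ^2) * d2 := by positivity
      linarith
    · push_neg at hcase
      have hb1 : |v t' r' x'| ≤ M := hbd t' ht' r' hr' x'
      have hb2 : |v t r x| ≤ M := hbd t ht r hr x
      have hdiff : |v t' r' x' - v t r x| ≤ 2 * M := by
        calc |v t' r' x' - v t r x| ≤ |v t' r' x'| + |v t r x| := abs_sub _ _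
          _ ≤ 2 * M := by linarith
      have hpen : 2 * M ≤ 1/(2*γ^2) * d2 := by
        have : 1/(2*γ^2) * (4 * M * γ ^ 2) = 2 * M := by field_simp; ring
        have h' : 1/(2*γ^2) * (4 * M * γ ^ 2) ≤ 1/(2*γ^2) * d2 :=
          mul_le_mul_of_nonneg_left hcase (by positivity)
        linarith
      have : 0 ≤ K * Real.sqrt γ := by positivity
      linarith
  -- membership of v t r x in both sets
  have hmemS : v t r x ∈ {y : ℝ | ∃ t' ∈ Icc (0:ℝ) T, ∃ r' ∈ Icc (0:ℝ) T,
      ∃ x' : EuclideanSpace ℝ (Fin n),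
      y = v t' r' x' - 1/(2*γ^2) * ((t - t')^2 + (r - r')^2 + ‖x - x'‖^2)} :=
    ⟨t, ht, r, hr, x, by simp⟩
  have hmemI : v t r x ∈ {y : ℝ | ∃ t' ∈ Icc (0:ℝ) T, ∃ r' ∈ Icc (0:ℝ) T,
      ∃ x' : EuclideanSpace ℝ (Fin n),
      y = v t' r' x' + 1/(2*γ^2) * ((t - t')^2 + (r - r')^2 + ‖x - x'‖^2)} :=
    ⟨t, ht, r, hr, x, by simp⟩
  have hub : ∀ y ∈ {y : ℝ | ∃ t' ∈ Icc (0:ℝ) T, ∃ r' ∈ Icc (0:ℝ) T,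
      ∃ x' : EuclideanSpace ℝ (Fin n),
      y = v t' r' x' - 1/(2*γ^2) * ((t - t')^2 + (r - r')^2 + ‖x - x'‖^2)},
      y ≤ v t r x + K * Real.sqrt γ := by
    rintro y ⟨t', ht', r', hr', x', rfl⟩
    have hk := key t' ht' r' hr' x'
    have := le_abs_self (v t' r' x' - v t r x)
    linarith
  have hlb : ∀ y ∈ {y : ℝ | ∃ t' ∈ Icc (0:ℝ) T, ∃ r' ∈ Icc (0:ℝ) T,
      ∃ x' : EuclideanSpace ℝ (Fin n),
      y = v t' r' x' + 1/(2*γ^2) * ((t - t')^2 + (r - r')^2 + ‖x - x'‖^2)},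
      v t r x - K * Real.sqrt γ ≤ y := by
    rintro y ⟨t', ht', r', hr', x', rfl⟩
    have hk := key t' ht' r' hr' x'
    have := neg_abs_le (v t' r' x' - v t r x)
    linarith
  unfold supConv infConv
  have hsup_le := csSup_le ⟨_, hmemS⟩ hub
  have hle_sup := le_csSup ⟨_, hub⟩ hmemS
  have hinf_ge := le_csInf ⟨_, hmemI⟩ hlb
  have hinf_le := csInf_le ⟨_, hlb⟩ hmemI
  constructor
  · linarith
  · linarith
end
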